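/- Fix G₁₃ with 1/2 < G₁₃ < 1 and set g* = √(1 − G₁₃)·(√2 − √(1 − G₁₃)). For G₂₃ ∈ (1 − G₁₃, G₁₃), define x₁ = (1 + G₁₃ − G₂₃)/(2G₁₃), x₂ = (1 + G₂₃ − G₁₃)/(2G₂₃), x₃ = (G₁₃ + G₂₃ − 1)/(2G₁₃G₂₃), and the normalized shares σ_i(G₂₃) = x_i/(x₁ + x₂ + x₃). Then σ₂(G₂₃) is strictly decreasing in G₂₃ on (1 − G₁₃, G₁₃) ∩ (1 − G₁₃, g*), and σ₁(G₂₃) is strictly decreasing in G₂₃ on (1 − G₁₃, G₁₃) ∩ (g*, G₁₃). -/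
import Mathlib


/-- with `1/2 < G₁₃ < 1` and `g* = √(1 − G₁₃)·(√2 − √(1 − G₁₃))`, the
normalized optimal shares `σ_i(G₂₃) = x_i/(x₁ + x₂ + x₃)` (with
`x₁ = (1 + G₁₃ − G₂₃)/(2G₁₃)`, `x₂ = (1 + G₂₃ − G₁₃)/(2G₂₃)`,
`x₃ = (G₁₃ + G₂₃ − 1)/(2G₁₃G₂₃)`) satisfy: `σ₂` is strictly decreasing on
`(1 − G₁₃, G₁₃) ∩ (1 − G₁₃, g*)` and `σ₁` is strictly decreasing on
`(1 − G₁₃, G₁₃) ∩ (g*, G₁₃)`. -/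
theorem statement_16 (g13 : ℝ) (h1 : 1 / 2 < g13) (h2 : g13 < 1)
    (gstar : ℝ) (hgstar : gstar = Real.sqrt (1 - g13) * (Real.sqrt 2 - Real.sqrt (1 - g13)))
    (x1 x2 x3 σ1 σ2 : ℝ → ℝ)
    (hx1 : ∀ x, x1 x = (1 + g13 - x) / (2 * g13))
    (hx2 : ∀ x, x2 x = (1 + x - g13) / (2 * x))
    (hx3 : ∀ x, x3 x = (g13 + x - 1) / (2 * g13 * x))
    (hσ1 : ∀ x, σ1 x = x1 x / (x1 x + x2 x + x3 x))
    (hσ2 : ∀ x, σ2 x = x2 x / (x1 x + x2 x + x3 x)) :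
    StrictAntiOn σ2 (Set.Ioo (1 - g13) g13 ∩ Set.Ioo (1 - g13) gstar) ∧
    StrictAntiOn σ1 (Set.Ioo (1 - g13) g13 ∩ Set.Ioo gstar g13) := by
  have hg0 : (0:ℝ) < g13 := by linarith
  have hu0 : (0:ℝ) < 1 - g13 := by linarith
  set N : ℝ → ℝ := fun t => -t^2 + 2*(g13+1)*t - (1-g13)^2 with hN
  -- key facts on the interval
  have key : ∀ t ∈ Set.Ioo (1 - g13) g13,
      0 < N t ∧ σ1 t = t*(1 + g13 - t) / N t ∧ σ2 t = g13*(1 + t - g13) / N t := by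
    intro t ht
    obtain ⟨htl, htr⟩ := ht
    have ht0 : 0 < t := by linarith
    have hNpos : 0 < N t := by
      have := mul_pos (show (0:ℝ) < t - (1 - g13) by linarith)
        (show (0:ℝ) < g13 - t by linarith)
      simp only [hN]
      nlinarith [this, mul_pos hg0 hu0]
    have hNne : N t ≠ 0 := ne_of_gt hNpos
    have htne : t ≠ 0 := ne_of_gt ht0
    have hgne : g13 ≠ 0 := ne_of_gt hg0
    have hsum : x1 t + x2 t + x3 t = N t / (2 * g13 * t) := by
      rw [hx1, hx2, hx3]
      simp only [hN]
      field_simp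
      ring
    refine ⟨hNpos, ?_, ?_⟩
    · rw [hσ1, hsum, hx1]
      field_simp
    · rw [hσ2, hsum, hx2]
      field_simp
  constructor
  · -- σ2 strictly decreasing on Ioo (1-g13) g13 ∩ Ioo (1-g13) gstar
    intro x hx y hy hxy
    obtain ⟨hxI, hxg⟩ := hx
    obtain ⟨hyI, hyg⟩ := hy
    obtain ⟨hNx, -, hσ2x⟩ := key x hxI
    obtain ⟨hNy, -, hσ2y⟩ := key y hyI
    -- bound: (y + (1-g13))^2 < 2*(1-g13)
    have hs : Real.sqrt (1-g13) ^ 2 = 1 - g13 := Real.sq_sqrt (le_of_lt hu0)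
    have hs2 : Real.sqrt 2 ^ 2 = 2 := Real.sq_sqrt (by norm_num)
    have hyu : y + (1 - g13) < Real.sqrt (1-g13) * Real.sqrt 2 := by
      have := hyg.2
      rw [hgstar] at this
      nlinarith [this, hs]
    have hyu0 : 0 < y + (1 - g13) := by
      have := hyI.1; linarith
    have hsq : (y + (1 - g13))^2 < 2 * (1 - g13) := by
      nlinarith [hyu, hyu0, hs, hs2, Real.sqrt_nonneg (1-g13), Real.sqrt_nonneg 2]
    have hxu0 : 0 < x + (1 - g13) := by
      have := hxI.1; linarith
    have hprod : (x + (1-g13)) * (y + (1-g13)) < 4 * (1 - g13) := by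
      nlinarith [hxy, hxu0, hyu0, hsq, hu0]
    rw [hσ2x, hσ2y, div_lt_div_iff₀ hNy hNx]
    simp only [hN]
    nlinarith [mul_pos (mul_pos hg0 (show (0:ℝ) < y - x by linarith))
      (show (0:ℝ) < 4*(1-g13) - (x + (1-g13)) * (y + (1-g13)) by linarith)]
  · -- σ1 strictly decreasing on Ioo (1-g13) g13 ∩ Ioo gstar g13
    intro x hx y hy hxy
    obtain ⟨hxI, -⟩ := hx
    obtain ⟨hyI, -⟩ := hy
    obtain ⟨hNx, hσ1x, -⟩ := key x hxI
    obtain ⟨hNy, hσ1y, -⟩ := key y hyI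
    have hQ : 0 < (1 + g13)*(x*y) + (1+g13)*(1-g13)^2 - (1-g13)^2*(x+y) := by
      nlinarith [mul_pos (show (0:ℝ) < x - (1-g13) by linarith [hxI.1])
        (show (0:ℝ) < y - (1-g13) by linarith [hyI.1]),
        mul_pos (mul_pos hu0 hg0) (show (0:ℝ) < x + y by linarith [hxI.1, hyI.1]) ]
    rw [hσ1x, hσ1y, div_lt_div_iff₀ hNy hNx]
    simp only [hN]
    nlinarith [mul_pos (show (0:ℝ) < y - x by linarith) hQ]
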